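/- Let X be a proper normal variety, D a big ℝ-divisor and E an effective ℝ-divisor with Supp(E) ⊆ Supp(N_σ(D)). Then N_σ(D + E) = N_σ(D) + E, and H^0(X, D) = H^0(X, D + E) = H^0(X, P_σ(D) + E) = H^0(X, P_σ(D)). -/

import Mathlib

/-- An abstract model of the divisor theory of a proper normal algebraic variety
over a field `k`.  `K` is the function field, `Prime` is the set of prime (Weil)
divisors, and `ord Γ f` is the order of vanishing of the rational function `f`
along the prime divisor `Γ`. -/
structure NormalProperVariety (k : Type) [Field k] where
  /-- The function field `K(X)`. -/
  K : Type
  [fieldK : Field K]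
  [algK : Algebra k K]
  /-- The set of prime (Weil) divisors on `X`. -/
  Prime : Type
  /-- `ord Γ f` is the order of vanishing of `f` along `Γ`. -/
  ord : Prime → K → ℤ
  ord_mul : ∀ (Γ : Prime) {f g : K}, f ≠ 0 → g ≠ 0 →
      ord Γ (f * g) = ord Γ f + ord Γ g
  ord_add : ∀ (Γ : Prime) {f g : K}, f ≠ 0 → g ≠ 0 → f + g ≠ 0 →
      min (ord Γ f) (ord Γ g) ≤ ord Γ (f + g)
  ord_const : ∀ (Γ : Prime) (c : k), c ≠ 0 → ord Γ (algebraMap k K c) = 0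
  finite_ord : ∀ {f : K}, f ≠ 0 → {Γ : Prime | ord Γ f ≠ 0}.Finite

attribute [instance] NormalProperVariety.fieldK NormalProperVariety.algK

namespace NormalProperVariety

variable {k : Type} [Field k] (X : NormalProperVariety k)

open Classical

/-- ℝ-divisors on `X`: finite formal `ℝ`-linear combinations of prime divisors. -/
abbrev Div : Type := X.Prime →₀ ℝ

/-- The divisor `div(f)` of a rational function (by convention `0` for `f = 0`). -/
noncomputable def divOf (f : X.K) : X.Div :=
  if hf : f = 0 then 0
  else Finsupp.ofSupportFinite (fun Γ => (X.ord Γ f : ℝ))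
    (Set.Finite.subset (X.finite_ord hf) (by
      intro Γ hΓ
      simp only [Function.mem_support, ne_eq, Int.cast_eq_zero] at hΓ
      exact hΓ))

/-- The set of principal divisors `div(f)`, `f ∈ K(X)*`. -/
def Principal : Set X.Div := {D | ∃ f : X.K, f ≠ 0 ∧ D = X.divOf f}

/-- `ℝ`-linear equivalence: `D - D' = Σ aᵢ div(fᵢ)` with `aᵢ ∈ ℝ`. -/
def REquiv (D D' : X.Div) : Prop := D - D' ∈ Submodule.span ℝ X.Principal

/-- `ℚ`-linear equivalence: `D - D' = Σ aᵢ div(fᵢ)` with `aᵢ ∈ ℚ`. -/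
def QEquiv (D D' : X.Div) : Prop := D - D' ∈ Submodule.span ℚ X.Principal

/-- `ℤ`-linear equivalence: `D - D' = div(f)`. -/
def ZEquiv (D D' : X.Div) : Prop := ∃ f : X.K, f ≠ 0 ∧ D - D' = X.divOf f

/-- `H⁰(X, 𝒪_X(D)) = H⁰(X, 𝒪_X(⌊D⌋))` as a subset of the function field, namely
`{f ∈ K(X)* : div(f) + D ≥ 0} ∪ {0}`.  (Since `ord` takes integer values,
replacing `D` by its round-down `⌊D⌋` does not change this set.) -/
def H0 (D : X.Div) : Set X.K :=
  {f : X.K | f = 0 ∨ ∀ Γ : X.Prime, 0 ≤ (X.ord Γ f : ℝ) + D Γ}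

/-- `h⁰(D) = dim_k H⁰(X, 𝒪_X(⌊D⌋))`. -/
noncomputable def h0 (D : X.Div) : ℕ := Set.finrank k (X.H0 D)

/-- The volume `vol(D) = limsup_{m → ∞} h⁰(mD) / (mⁿ / n!)`, where `n = dim X`. -/
noncomputable def vol (n : ℕ) (D : X.Div) : ℝ :=
  Filter.limsup (fun m : ℝ => (X.h0 (m • D) : ℝ) * (n.factorial : ℝ) / m ^ n)
    Filter.atTop

/-- `D` is big iff `vol(D) > 0` (`n = dim X`). -/
def IsBig (n : ℕ) (D : X.Div) : Prop := 0 < X.vol n D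

/-- Nakayama's `σ_Γ(D) = inf { mult_Γ D' : D' ∼_ℝ D, D' ≥ 0 }`. -/
noncomputable def sigma (D : X.Div) (Γ : X.Prime) : ℝ :=
  sInf {t : ℝ | ∃ D' : X.Div, X.REquiv D' D ∧ 0 ≤ D' ∧ t = D' Γ}

/-- The negative part `N_σ(D) = Σ_Γ σ_Γ(D) · Γ` of the divisorial Zariski
decomposition (by convention `0` in the degenerate case where infinitely many of
the `σ_Γ(D)` are nonzero). -/
noncomputable def Nsigma (D : X.Div) : X.Div :=
  if h : (Function.support fun Γ => X.sigma D Γ).Finite then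
    Finsupp.ofSupportFinite _ h
  else 0

/-- The positive part `P_σ(D) = D - N_σ(D)`. -/
noncomputable def Psigma (D : X.Div) : X.Div := D - X.Nsigma D

/-- A big ℝ-divisor is movable if `N_σ(D) = 0`. -/
def Movable (D : X.Div) : Prop := X.Nsigma D = 0

end NormalProperVariety

/-!
Write `|D|_ℝ` for the effective divisors `ℝ`-linearly equivalent to `D`; bigness makes
it nonempty. The heart of the matter is that every `D' ∈ |D + E|_ℝ` satisfies `D' ≥ E`. Otherwise
`C = D' - E ∼_ℝ D` is not effective, and moving from some `D₀ ∈ |D|_ℝ` towards `C` until the first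
coefficient hits zero produces a member of `|D|_ℝ` vanishing along a prime `Γ` where `C` is
negative; then `σ_Γ(D) = 0` although `Γ ⊆ Supp E ⊆ Supp N_σ(D)`. Hence `|D + E|_ℝ = |D|_ℝ + E`,
which gives `σ(D + E) = σ(D) + E`, so `P_σ(D + E) = P_σ(D)`. The sections of `D` are then squeezed:
`H⁰(P_σ(D)) ⊆ H⁰(P_σ(D) + E) ⊆ H⁰(D + E) ⊆ H⁰(P_σ(D + E))`, the last inclusion because a nonzero
section `f` of any `D'` gives `div(f) + D' ∈ |D'|_ℝ`, hence `σ(D') ≤ div(f) + D'`.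
-/

namespace Finsupp

lemma nonneg_iff {ι M : Type*} [Zero M] [LE M] {f : ι →₀ M} : 0 ≤ f ↔ ∀ i, 0 ≤ f i := le_def

/-- `t` is where the segment from `A ≥ 0` towards `C ≱ 0` leaves the nonnegative cone. -/
lemma exists_lineMap_nonneg_apply_eq_zero {ι : Type*} {A C : ι →₀ ℝ} (hA : 0 ≤ A)
    (hC : ¬ 0 ≤ C) :
    ∃ (t : ℝ) (i : ι), C i < 0 ∧ 0 ≤ AffineMap.lineMap A C t ∧ AffineMap.lineMap A C t i = 0 := by
  classical
  have hA' := nonneg_iff.mp hA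
  obtain ⟨i₁, hi₁⟩ : ∃ i, C i < 0 := by simpa [nonneg_iff] using hC
  set bad := C.support.filter (C · < 0)
  have mem_bad : ∀ {j}, j ∈ bad ↔ C j < 0 := fun {j} => by
    simpa [bad] using fun h : C j < 0 => h.ne
  obtain ⟨i, hi, hmin⟩ := bad.exists_min_image (fun j => A j / (A j - C j))
    ⟨i₁, mem_bad.mpr hi₁⟩
  have hCi := mem_bad.mp hi
  have hpos : 0 < A i - C i := by linarith [hA' i]
  set t := A i / (A i - C i)
  have ht₀ : 0 ≤ t := div_nonneg (hA' i) hpos.le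
  have ht₁ : t ≤ 1 := (div_le_one hpos).mpr (by linarith)
  refine ⟨t, i, hCi, nonneg_iff.mpr fun j => ?_, ?_⟩
  · simp only [AffineMap.lineMap_apply_module, coe_add, coe_smul, Pi.add_apply, Pi.smul_apply,
      smul_eq_mul]
    by_cases hCj : C j < 0
    · have hj : 0 < A j - C j := by linarith [hA' j]
      have := (le_div_iff₀ hj).mp (hmin j (mem_bad.mpr hCj))
      linarith
    · nlinarith [hA' j]
  · simp only [AffineMap.lineMap_apply_module, coe_add, coe_smul, Pi.add_apply, Pi.smul_apply,
      smul_eq_mul, t]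
    field_simp
    ring

end Finsupp

namespace NormalProperVariety

variable {k : Type} [Field k] {X : NormalProperVariety k}

lemma divOf_apply {f : X.K} (hf : f ≠ 0) (Γ : X.Prime) : X.divOf f Γ = X.ord Γ f := by
  rw [divOf, dif_neg hf]
  rfl

section REquiv

variable {A C D D' E : X.Div}

lemma REquiv.add_right_iff : X.REquiv (D' + E) (D + E) ↔ X.REquiv D' D := by
  rw [REquiv, REquiv, add_sub_add_right_eq_sub]

lemma REquiv.sub_right (h : X.REquiv D' (D + E)) : X.REquiv (D' - E) D := by
  rwa [REquiv, sub_sub, add_comm E]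

lemma REquiv.lineMap (hA : X.REquiv A D) (hC : X.REquiv C D) (t : ℝ) :
    X.REquiv (AffineMap.lineMap A C t) D := by
  have : AffineMap.lineMap A C t - D = (1 - t) • (A - D) + t • (C - D) := by
    rw [AffineMap.lineMap_apply_module]
    module
  rw [REquiv, this]
  exact add_mem (Submodule.smul_mem _ _ hA) (Submodule.smul_mem _ _ hC)

lemma REquiv.smul_divOf_add {f : X.K} (hf : f ≠ 0) (c : ℝ) :
    X.REquiv (c • X.divOf f + D) D := by
  rw [REquiv, add_sub_cancel_right]
  exact Submodule.smul_mem _ _ (Submodule.subset_span ⟨f, hf, rfl⟩)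

end REquiv

variable (X) in
/-- The `ℝ`-linear system `|D|_ℝ`. -/
def RLinearSystem (D : X.Div) : Set X.Div := {D' | X.REquiv D' D ∧ 0 ≤ D'}

variable (X) in
def IsREffective (D : X.Div) : Prop := (X.RLinearSystem D).Nonempty

lemma IsREffective.add {D E : X.Div} (hD : X.IsREffective D) (hE : 0 ≤ E) :
    X.IsREffective (D + E) :=
  let ⟨D₀, hD₀⟩ := hD
  ⟨D₀ + E, REquiv.add_right_iff.mpr hD₀.1, add_nonneg hD₀.2 hE⟩

section H0

variable {D D' : X.Div} {f : X.K}

lemma H0_mono (h : D ≤ D') : X.H0 D ⊆ X.H0 D' :=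
  fun _ hf => hf.imp_right fun hf Γ => (hf Γ).trans (by linarith [Finsupp.le_def.mp h Γ])

lemma divOf_add_nonneg_of_mem_H0 (hf : f ∈ X.H0 D) (hf0 : f ≠ 0) : 0 ≤ X.divOf f + D :=
  Finsupp.nonneg_iff.mpr fun Γ => by simpa [divOf_apply hf0] using hf.resolve_left hf0 Γ

lemma divOf_add_mem_RLinearSystem (hf : f ∈ X.H0 D) (hf0 : f ≠ 0) :
    X.divOf f + D ∈ X.RLinearSystem D :=
  ⟨by simpa using REquiv.smul_divOf_add (D := D) hf0 1, divOf_add_nonneg_of_mem_H0 hf hf0⟩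

lemma H0_smul_subset_zero (hD : ¬ X.IsREffective D) {m : ℝ} (hm : 0 < m) :
    X.H0 (m • D) ⊆ {0} := by
  intro f hf
  by_contra hf0
  refine hD ⟨m⁻¹ • X.divOf f + D, REquiv.smul_divOf_add hf0 _, ?_⟩
  have : m⁻¹ • X.divOf f + D = m⁻¹ • (X.divOf f + m • D) := by
    rw [smul_add, inv_smul_smul₀ hm.ne']
  rw [this]
  exact smul_nonneg (inv_nonneg.mpr hm.le) (divOf_add_nonneg_of_mem_H0 hf hf0)

lemma h0_eq_zero (h : X.H0 D ⊆ {0}) : X.h0 D = 0 := by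
  rw [h0, Set.finrank, Submodule.span_eq_bot.mpr h]
  exact finrank_bot k X.K

end H0

lemma vol_eq_zero {D : X.Div} (hD : ¬ X.IsREffective D) (n : ℕ) : X.vol n D = 0 := by
  have hev : (fun m : ℝ => (X.h0 (m • D) : ℝ) * n.factorial / m ^ n) =ᶠ[Filter.atTop] 0 := by
    filter_upwards [Filter.eventually_gt_atTop 0] with m hm
    simp [h0_eq_zero (H0_smul_subset_zero hD hm)]
  rw [vol, Filter.limsup_congr hev]
  exact Filter.limsup_const 0

lemma IsBig.isREffective {n : ℕ} {D : X.Div} (hD : X.IsBig n D) : X.IsREffective D := by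
  by_contra h
  exact hD.ne' (vol_eq_zero h n)

section Sigma

variable {D E D' : X.Div} {Γ : X.Prime}

lemma sigma_eq_sInf_image : X.sigma D Γ = sInf ((· Γ) '' X.RLinearSystem D) := by
  simp [sigma, RLinearSystem, Set.image, and_assoc, eq_comm]

lemma zero_mem_lowerBounds_image_RLinearSystem :
    0 ∈ lowerBounds ((· Γ) '' X.RLinearSystem D) := by
  rintro _ ⟨D', hD', rfl⟩
  exact Finsupp.nonneg_iff.mp hD'.2 Γ

lemma sigma_nonneg : 0 ≤ X.sigma D Γ := by
  rw [sigma_eq_sInf_image]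
  exact Real.sInf_nonneg fun _ ht => zero_mem_lowerBounds_image_RLinearSystem ht

lemma sigma_le (hD' : D' ∈ X.RLinearSystem D) (Γ : X.Prime) : X.sigma D Γ ≤ D' Γ := by
  rw [sigma_eq_sInf_image]
  exact csInf_le ⟨0, zero_mem_lowerBounds_image_RLinearSystem⟩ ⟨D', hD', rfl⟩

lemma sigma_le_ord_add {f : X.K} (hf : f ∈ X.H0 D) (hf0 : f ≠ 0) (Γ : X.Prime) :
    X.sigma D Γ ≤ X.ord Γ f + D Γ := by
  simpa [divOf_apply hf0] using sigma_le (divOf_add_mem_RLinearSystem hf hf0) Γ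

lemma nsigma_nonneg : 0 ≤ X.Nsigma D := by
  unfold Nsigma
  split_ifs
  · exact Finsupp.nonneg_iff.mpr fun _ => sigma_nonneg
  · rfl

lemma nsigma_apply (hD : X.IsREffective D) (Γ : X.Prime) : X.Nsigma D Γ = X.sigma D Γ := by
  obtain ⟨D₀, hD₀⟩ := hD
  have hfin : (Function.support fun Γ => X.sigma D Γ).Finite :=
    D₀.support.finite_toSet.subset fun Γ hΓ => by
      simpa using fun h0 => hΓ ((h0 ▸ sigma_le hD₀ Γ).antisymm sigma_nonneg)
  rw [Nsigma, dif_pos hfin]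
  rfl

lemma psigma_le : X.Psigma D ≤ D := sub_le_self D nsigma_nonneg

lemma H0_psigma (hD : X.IsREffective D) : X.H0 (X.Psigma D) = X.H0 D := by
  refine (H0_mono psigma_le).antisymm fun f hf => ?_
  rcases eq_or_ne f 0 with rfl | hf0
  · exact Or.inl rfl
  refine Or.inr fun Γ => ?_
  have := sigma_le_ord_add hf hf0 Γ
  rw [Psigma, Finsupp.sub_apply, nsigma_apply hD]
  linarith

end Sigma

section Add

variable {D E D' : X.Div}

lemma le_of_mem_RLinearSystem_add (hD : X.IsREffective D)
    (hsupp : E.support ⊆ (X.Nsigma D).support) (hD' : D' ∈ X.RLinearSystem (D + E)) :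
    E ≤ D' := by
  obtain ⟨D₀, hD₀⟩ := hD
  by_contra hle
  obtain ⟨t, Γ, hΓ, hB, hBΓ⟩ :=
    Finsupp.exists_lineMap_nonneg_apply_eq_zero hD₀.2 (C := D' - E) (by rwa [sub_nonneg])
  have hσ : X.sigma D Γ = 0 :=
    (hBΓ ▸ sigma_le ⟨hD₀.1.lineMap hD'.1.sub_right t, hB⟩ Γ).antisymm sigma_nonneg
  have hEΓ : E Γ = 0 :=
    Finsupp.notMem_support_iff.mp (mt (@hsupp Γ) (by simp [nsigma_apply ⟨D₀, hD₀⟩, hσ]))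
  have := Finsupp.nonneg_iff.mp hD'.2 Γ
  simp only [Finsupp.coe_sub, Pi.sub_apply, hEΓ, sub_zero] at hΓ
  linarith

lemma RLinearSystem_add (hD : X.IsREffective D) (hE : 0 ≤ E)
    (hsupp : E.support ⊆ (X.Nsigma D).support) :
    X.RLinearSystem (D + E) = (· + E) '' X.RLinearSystem D := by
  ext D'
  constructor
  · intro hD'
    exact ⟨D' - E, ⟨hD'.1.sub_right, sub_nonneg.mpr (le_of_mem_RLinearSystem_add hD hsupp hD')⟩,
      sub_add_cancel D' E⟩
  · rintro ⟨D'', hD'', rfl⟩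
    exact ⟨REquiv.add_right_iff.mpr hD''.1, add_nonneg hD''.2 hE⟩

lemma nsigma_add (hD : X.IsREffective D) (hE : 0 ≤ E)
    (hsupp : E.support ⊆ (X.Nsigma D).support) : X.Nsigma (D + E) = X.Nsigma D + E := by
  ext Γ
  rw [nsigma_apply (hD.add hE), Finsupp.add_apply, nsigma_apply hD, sigma_eq_sInf_image,
    sigma_eq_sInf_image, RLinearSystem_add hD hE hsupp, Set.image_image]
  have := (OrderIso.addRight (E Γ)).map_csInf' (hD.image (· Γ))
    ⟨0, zero_mem_lowerBounds_image_RLinearSystem⟩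
  rw [Set.image_image] at this
  exact this.symm

end Add

end NormalProperVariety

/-- Let `X` be a proper normal variety, `D` a big ℝ-divisor and `E`
an effective ℝ-divisor with `Supp(E) ⊆ Supp(N_σ(D))`.  Then
`N_σ(D + E) = N_σ(D) + E` and
`H⁰(X, D) = H⁰(X, D + E) = H⁰(X, P_σ(D) + E) = H⁰(X, P_σ(D))`. -/
theorem nsigma_add_support {k : Type} [Field k] (X : NormalProperVariety k) (n : ℕ)
    (D E : X.Div) (hD : X.IsBig n D) (hE : 0 ≤ E)
    (hsupp : E.support ⊆ (X.Nsigma D).support) :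
    X.Nsigma (D + E) = X.Nsigma D + E ∧
      X.H0 D = X.H0 (D + E) ∧
      X.H0 (D + E) = X.H0 (X.Psigma D + E) ∧
      X.H0 (X.Psigma D + E) = X.H0 (X.Psigma D) := by
  open NormalProperVariety in
  have hD' := hD.isREffective
  have hN := nsigma_add hD' hE hsupp
  have hP : X.Psigma (D + E) = X.Psigma D := by
    rw [Psigma, Psigma, hN, add_sub_add_right_eq_sub]
  have hDE : X.H0 (D + E) = X.H0 (X.Psigma D) := by
    rw [← hP, H0_psigma (hD'.add hE)]
  have hPE₁ : X.H0 (X.Psigma D) ⊆ X.H0 (X.Psigma D + E) := H0_mono (le_add_of_nonneg_right hE)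
  have hPE₂ : X.H0 (X.Psigma D + E) ⊆ X.H0 (D + E) := H0_mono (add_le_add_left psigma_le E)
  refine ⟨hN, (H0_psigma hD').symm.trans hDE.symm, ?_, ?_⟩
  · exact (hDE.le.trans hPE₁).antisymm hPE₂
  · exact (hPE₂.trans hDE.le).antisymm hPE₁
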